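/- Let γ ∈ H²(S¹, ℝⁿ) be an immersion, let {T(0), ν₁⁰, …, ν_{n−1}⁰} be an orthonormal basis of ℝⁿ with T(0) = γ'(0)/|γ'(0)|, and let νᵢ solve the linear ODE νᵢ' = −⟨νᵢ, γ''⟩γ'/|γ'|² with νᵢ(0) = νᵢ⁰. Then for all u ∈ S¹: ⟨γ'(u), νᵢ(u)⟩ = 0 and ⟨νᵢ(u), νⱼ(u)⟩ = δᵢⱼ, i.e. {γ'(u)/|γ'(u)|, ν₁(u), …, ν_{n−1}(u)} is an orthonormal frame along γ. -/

import Mathlib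

/-!
Differentiating, `⟪γ', νᵢ⟫' = ⟪γ'', νᵢ⟫ - (⟪νᵢ, γ''⟫ / ‖γ'‖²) ‖γ'‖² = 0`, so every `νᵢ` stays
orthogonal to `γ'`. Since every `νᵢ'` is a multiple of `γ'`, this orthogonality in turn gives
`⟪νᵢ, νⱼ⟫' = 0`, so the Gram matrix of the `νᵢ` keeps its initial value, the identity.
-/

open scoped RealInnerProductSpace

theorem is_const_of_forall_hasDerivAt_zero {f : ℝ → ℝ} (hf : ∀ t, HasDerivAt f 0 t)
    (s t : ℝ) : f s = f t :=
  is_const_of_deriv_eq_zero (fun t => (hf t).differentiableAt) (fun t => (hf t).deriv) s t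

section

variable {E : Type*} [NormedAddCommGroup E] [InnerProductSpace ℝ E]

theorem hasDerivAt_inner_tangent_eq_zero {T ν : ℝ → E} {T' : E} {t : ℝ}
    (hT : HasDerivAt T T' t) (hTt : T t ≠ 0)
    (hν : HasDerivAt ν (-((⟪ν t, T'⟫ / ‖T t‖ ^ 2) • T t)) t) :
    HasDerivAt (fun s => ⟪T s, ν s⟫) 0 t := by
  refine (hT.inner ℝ hν).congr_deriv ?_
  rw [inner_neg_right, inner_smul_right, real_inner_self_eq_norm_sq,
    div_mul_cancel₀ _ (by positivity), real_inner_comm]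
  ring

theorem hasDerivAt_inner_eq_zero_of_deriv_parallel {T ν μ : ℝ → E} {a b t : ℝ}
    (hν : HasDerivAt ν (a • T t) t) (hμ : HasDerivAt μ (b • T t) t)
    (hνT : ⟪T t, ν t⟫ = 0) (hμT : ⟪T t, μ t⟫ = 0) :
    HasDerivAt (fun s => ⟪ν s, μ s⟫) 0 t := by
  refine (hν.inner ℝ hμ).congr_deriv ?_
  rw [real_inner_smul_left, inner_smul_right, real_inner_comm, hμT, hνT]
  ring

end

/-- the parallel-type ODE νᵢ' = −⟨νᵢ, γ''⟩γ'/|γ'|² propagates an orthonormal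
frame: if {T(0), ν₁(0), …, ν_{n−1}(0)} is orthonormal, then for every u the vectors νᵢ(u)
are orthonormal and orthogonal to γ'(u). -/
theorem orthonormal_frame_ode (n : ℕ) (γ : ℝ → EuclideanSpace ℝ (Fin n))
    (hγ : ContDiff ℝ 2 γ) (himm : ∀ u, 0 < ‖deriv γ u‖)
    (ν : Fin (n - 1) → ℝ → EuclideanSpace ℝ (Fin n))
    (hODE : ∀ i u, HasDerivAt (ν i)
      (-((⟪ν i u, deriv (deriv γ) u⟫ / ‖deriv γ u‖ ^ 2) • deriv γ u)) u)
    (hT0 : ∀ i, ⟪deriv γ 0, ν i 0⟫ = 0)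
    (hON0 : ∀ i j, ⟪ν i 0, ν j 0⟫ = if i = j then 1 else 0) :
    ∀ u : ℝ, (∀ i, ⟪deriv γ u, ν i u⟫ = 0) ∧
      (∀ i j, ⟪ν i u, ν j u⟫ = if i = j then 1 else 0) := by
  have hγ' : ∀ u, HasDerivAt (deriv γ) (deriv (deriv γ) u) u :=
    fun u => (hγ.differentiable_deriv_two u).hasDerivAt
  have htangent : ∀ i u, ⟪deriv γ u, ν i u⟫ = 0 := fun i u => by
    rw [← hT0 i]
    exact is_const_of_forall_hasDerivAt_zero (fun t => hasDerivAt_inner_tangent_eq_zero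
      (hγ' t) (norm_pos_iff.mp (himm t)) (hODE i t)) u 0
  have hparallel : ∀ i u, HasDerivAt (ν i)
      ((-(⟪ν i u, deriv (deriv γ) u⟫ / ‖deriv γ u‖ ^ 2)) • deriv γ u) u := fun i u => by
    simpa only [neg_smul] using hODE i u
  intro u
  refine ⟨fun i => htangent i u, fun i j => ?_⟩
  rw [← hON0 i j]
  exact is_const_of_forall_hasDerivAt_zero (fun t => hasDerivAt_inner_eq_zero_of_deriv_parallel
    (hparallel i t) (hparallel j t) (htangent i t) (htangent j t)) u 0
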